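/- Let X and Y be compact metrizable spaces, p, q ∈ X distinct points, z, w ∈ Y, and α, β ∈ (0,1). Let φ : C(X) → C(Y) be a unital positive linear map sending C(X)_{(p,q,α)} into C(Y)_{(z,w,β)}, and let μ_z, μ_w be the Borel probability measures on X representing f ↦ φ(f)(z) and f ↦ φ(f)(w). Let {X₁,…,Xₙ} be a partition of X into connected Borel sets with p ∈ X₁ and q ∈ Xₙ. Then μ_z(Xᵢ) = β μ_w(Xᵢ) for i = 2,…,n−1, and α μ_z(X₁) + μ_z(Xₙ) = β (α μ_w(X₁) + μ_w(Xₙ)). -/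

import Mathlib

/-! Since `α ≠ 1`, subtracting from `f` the constant `d = (f p - α f q) / (1 - α)` lands in
`C(X)_{(p,q,α)}`; as `φ` is unital this gives `φ f z - β φ f w = c (f p - α f q)` with
`c = (1 - β) / (1 - α) ≥ 0`. In measure form, `μ_z + cα δ_q = β μ_w + c δ_p`, and evaluating
this on the pieces `Xᵢ`, of which only `X₁` contains `p` and only `Xₙ` contains `q`, gives both
claims. -/

open ContinuousMap MeasureTheory
open scoped NNReal BoundedContinuousFunction

theorem apply_sub_mul_apply_eq_of_mapsTo {X Y : Type*} [TopologicalSpace X] [TopologicalSpace Y]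
    {p q : X} {z w : Y} {α β : ℝ} {φ : C(X, ℝ) →ₗ[ℝ] C(Y, ℝ)} (hunital : φ 1 = 1)
    (hsub : ∀ f : C(X, ℝ), f p = α * f q → φ f z = β * φ f w) (hα : α ≠ 1) (f : C(X, ℝ)) :
    φ f z - β * φ f w = (1 - β) / (1 - α) * f p - (1 - β) / (1 - α) * α * f q := by
  set d := (f p - α * f q) / (1 - α)
  have hd : f p - α * f q = d * (1 - α) := (div_mul_cancel₀ _ (sub_ne_zero.2 hα.symm)).symm
  have hmem : (f - d • 1) p = α * (f - d • 1) q := by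
    simp only [ContinuousMap.sub_apply, ContinuousMap.smul_apply, one_apply, smul_eq_mul, mul_one]
    linarith
  have hshift := hsub _ hmem
  simp only [map_sub, map_smul, hunital, ContinuousMap.sub_apply, ContinuousMap.smul_apply,
    one_apply, smul_eq_mul, mul_one] at hshift
  calc φ f z - β * φ f w = (1 - β) * d := by linarith
    _ = (1 - β) / (1 - α) * (f p - α * f q) := by
      rw [hd, div_mul_eq_mul_div, mul_div_assoc, mul_div_cancel_right₀ _ (sub_ne_zero.2 hα.symm)]
    _ = _ := by ring

theorem measureReal_sub_eq_of_integral_sub {X : Type*} [PseudoMetricSpace X] [MeasurableSpace X]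
    [BorelSpace X] [MeasurableSingletonClass X] {μ ν : Measure X} [IsFiniteMeasure μ]
    [IsFiniteMeasure ν] {p q : X} {a b c : ℝ≥0}
    (h : ∀ f : X →ᵇ ℝ,
      ∫ x, f x ∂μ - b * ∫ x, f x ∂ν = c * f p - a * f q)
    {S : Set X} (hS : MeasurableSet S) :
    μ.real S - b * ν.real S = c * S.indicator 1 p - a * S.indicator 1 q := by
  have hmeasure : μ + a • Measure.dirac q = b • ν + c • Measure.dirac p := by
    refine ext_of_forall_integral_eq_of_IsFiniteMeasure fun f => ?_
    rw [integral_add_measure (f.integrable _) (f.integrable _),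
      integral_add_measure (f.integrable _) (f.integrable _)]
    simp only [integral_smul_nnreal_measure, integral_dirac, NNReal.smul_def, smul_eq_mul]
    linarith [h f]
  have hSeq : (μ + a • Measure.dirac q).real S = (b • ν + c • Measure.dirac p).real S := by
    rw [hmeasure]
  have hdirac (x : X) : (Measure.dirac x).real S = S.indicator 1 x := by
    by_cases hx : x ∈ S <;> simp [measureReal_def, Measure.dirac_apply' _ hS, hx]
  rw [measureReal_add_apply, measureReal_add_apply] at hSeq
  simp only [measureReal_nnreal_smul_apply, hdirac] at hSeq
  linarith

theorem stmt16 (X Y : Type*) [MetricSpace X]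
    [MeasurableSpace X] [BorelSpace X]
    [MetricSpace Y]
    (p q : X) (z w : Y)
    (α β : ℝ) (hα : α ∈ Set.Ioo (0 : ℝ) 1) (hβ : β ∈ Set.Ioo (0 : ℝ) 1)
    (φ : C(X, ℝ) →ₗ[ℝ] C(Y, ℝ))
    (hunital : φ 1 = 1)
    (hsub : ∀ f : C(X, ℝ), f p = α * f q → φ f z = β * φ f w)
    (μz μw : Measure X)
    [IsProbabilityMeasure μz] [IsProbabilityMeasure μw]
    (hμz : ∀ f : C(X, ℝ), φ f z = ∫ t, f t ∂μz)
    (hμw : ∀ f : C(X, ℝ), φ f w = ∫ t, f t ∂μw)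
    (n : ℕ) (hn : 2 ≤ n) (P : Fin n → Set X)
    (hmeas : ∀ i, MeasurableSet (P i))
    (hdisj : Pairwise (Function.onFun Disjoint P))
    (hp : p ∈ P ⟨0, by omega⟩) (hq : q ∈ P ⟨n - 1, by omega⟩) :
    (∀ i : Fin n, 1 ≤ i.val → i.val ≤ n - 2 →
      (μz (P i)).toReal = β * (μw (P i)).toReal) ∧
    α * (μz (P ⟨0, by omega⟩)).toReal + (μz (P ⟨n - 1, by omega⟩)).toReal =
      β * (α * (μw (P ⟨0, by omega⟩)).toReal + (μw (P ⟨n - 1, by omega⟩)).toReal) := by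
  obtain ⟨hα0, hα1⟩ := hα
  obtain ⟨hβ0, hβ1⟩ := hβ
  set c := (1 - β) / (1 - α)
  have hc : 0 ≤ c := div_nonneg (by linarith) (by linarith)
  have hset (i : Fin n) : μz.real (P i) - β * μw.real (P i) =
      c * (P i).indicator 1 p - c * α * (P i).indicator 1 q :=
    measureReal_sub_eq_of_integral_sub (a := ⟨c * α, by positivity⟩) (b := ⟨β, hβ0.le⟩)
      (c := ⟨c, hc⟩) (fun f => by
        have := apply_sub_mul_apply_eq_of_mapsTo hunital hsub hα1.ne f.toContinuousMap
        rwa [hμz, hμw] at this)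
      (hmeas i)
  have h0 : (⟨0, by omega⟩ : Fin n) ≠ ⟨n - 1, by omega⟩ := Fin.ne_of_val_ne (by dsimp only; omega)
  simp only [← measureReal_def]
  refine ⟨fun i hi hi' => ?_, ?_⟩
  · have hpi : p ∉ P i := (hdisj (Fin.ne_of_val_ne (by dsimp only; omega))).notMem_of_mem_left hp
    have hqi : q ∉ P i := (hdisj (Fin.ne_of_val_ne (by dsimp only; omega))).notMem_of_mem_left hq
    have hmid := hset i
    rw [Set.indicator_of_notMem hpi, Set.indicator_of_notMem hqi] at hmid
    linarith
  · have hq0 := (hdisj h0.symm).notMem_of_mem_left hq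
    have hpn := (hdisj h0).notMem_of_mem_left hp
    have hfirst := hset ⟨0, by omega⟩
    have hlast := hset ⟨n - 1, by omega⟩
    rw [Set.indicator_of_mem hp, Set.indicator_of_notMem hq0, Pi.one_apply] at hfirst
    rw [Set.indicator_of_mem hq, Set.indicator_of_notMem hpn, Pi.one_apply] at hlast
    linear_combination α * hfirst + hlast
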